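/- arXiv:1503.02547 — 3 statements merged into one kernel-verified Lean document; each statement's English description precedes it below -/
import Mathlib

section
/- Let (i,j,k,l,m,n) be an admissible 6-tuple of elements of I_r. Then the 6-tuples (j,i,k,m,l,n), (i,k,j,l,n,m), (i,m,n,l,j,k), (l,m,k,i,j,n) and (l,j,n,i,m,k) are also admissible, and the corresponding quantum 6j-symbols agree: |i j k; l m n| = |j i k; m l n| = |i k j; l n m| = |i m n; l j k| = |l m k; i j n| = |l j n; i m k|. -/
/- An element of I_r = {0, 1/2, 1, …, (r−2)/2} is represented by its *double*,
a natural number `a` with `a ≤ r − 2` (equivalently `a ∈ Finset.range (r − 1)`);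
the half-integer it represents is `a / 2`. -/

/-- The quantum integer `[n] = (qⁿ − q⁻ⁿ)/(q − q⁻¹)`. -/
noncomputable def qint (q : ℂ) (n : ℤ) : ℂ := (q ^ n - q ^ (-n)) / (q - q⁻¹)

/-- The quantum factorial `[n]! = [n][n−1]⋯[1]`, with `[0]! = 1`. -/
noncomputable def qfact (q : ℂ) : ℕ → ℂ
  | 0 => 1
  | n + 1 => qint q ((n : ℤ) + 1) * qfact q n

/-- Square root with the paper's convention `√x = √(−x)·√(−1)` for a negative real
number `x` (this is the principal complex square root). -/
noncomputable def csqrt (z : ℂ) : ℂ := z ^ ((1 : ℂ) / 2)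

/-- Admissibility of the triple `(i/2, j/2, k/2)` of half-integers (arguments are
doubles): the triangle inequalities hold, the sum `i/2 + j/2 + k/2` is an integer,
and `i/2 + j/2 + k/2 ≤ r − 2`. -/
def TriAdm (r i j k : ℕ) : Prop :=
  k ≤ i + j ∧ i ≤ j + k ∧ j ≤ k + i ∧ (i + j + k) % 2 = 0 ∧ i + j + k ≤ 2 * (r - 2)

instance (r i j k : ℕ) : Decidable (TriAdm r i j k) := by
  unfold TriAdm; infer_instance

/-- Admissibility of the 6-tuple `(i/2, j/2, k/2, l/2, m/2, n/2)` (arguments are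
doubles): the four triples `(i,j,k)`, `(j,l,n)`, `(i,m,n)`, `(k,l,m)` are admissible. -/
def SixAdm (r i j k l m n : ℕ) : Prop :=
  TriAdm r i j k ∧ TriAdm r j l n ∧ TriAdm r i m n ∧ TriAdm r k l m

instance (r i j k l m n : ℕ) : Decidable (SixAdm r i j k l m n) := by
  unfold SixAdm; infer_instance

/-- `Δ(i/2, j/2, k/2)` (arguments are doubles): for an admissible triple all the
divisions below are exact. -/
noncomputable def triDelta (q : ℂ) (i j k : ℕ) : ℂ :=
  csqrt (qfact q ((i + j - k) / 2) * qfact q ((j + k - i) / 2) * qfact q ((k + i - j) / 2) /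
    qfact q ((i + j + k) / 2 + 1))

/-- The quantum 6j-symbol `|i/2 j/2 k/2; l/2 m/2 n/2|` (arguments are doubles).
The prefactor `√(−1)^{−2(i/2 + ⋯ + n/2)}` is `I^{−(i+⋯+n)}`, and the summation
variable `z` runs over the integers from `max(T₁,T₂,T₃,T₄)` to `min(Q₁,Q₂,Q₃)`. -/
noncomputable def sixj (q : ℂ) (i j k l m n : ℕ) : ℂ :=
  Complex.I ^ (-((i : ℤ) + j + k + l + m + n)) *
    (triDelta q i j k * triDelta q j l n * triDelta q i m n * triDelta q k l m) *
    ∑ z ∈ Finset.Icc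
        (max (max ((i + j + k) / 2) ((j + l + n) / 2))
             (max ((i + m + n) / 2) ((k + l + m) / 2)))
        (min ((i + j + l + m) / 2) (min ((i + k + l + n) / 2) ((j + k + m + n) / 2))),
      (-1 : ℂ) ^ z * qfact q (z + 1) /
        (qfact q (z - (i + j + k) / 2) * qfact q (z - (j + l + n) / 2) *
         qfact q (z - (i + m + n) / 2) * qfact q (z - (k + l + m) / 2) *
         qfact q ((i + j + l + m) / 2 - z) * qfact q ((i + k + l + n) / 2 - z) *
         qfact q ((j + k + m + n) / 2 - z))

/-- `w_i = (−1)^{2i}[2i+1]` (the argument is the double of the half-integer `i`). -/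
noncomputable def wgt (q : ℂ) (i : ℕ) : ℂ := (-1 : ℂ) ^ i * qint q ((i : ℤ) + 1)

/-! Label the edges of a tetrahedron by `i, …, n` so that `(i,j,k)`, `(j,l,n)`, `(i,m,n)`, `(k,l,m)`
are its faces; then `(i,l)`, `(j,m)`, `(k,n)` are its pairs of opposite edges. The 6j-symbol is
built from the faces (admissibility, the `Δ`'s and `T₁,…,T₄`) and from the opposite pairs (each
`Qₐ` sums two of them), every ingredient entering symmetrically. A relabelling of the tetrahedron
only permutes faces and opposite pairs, and the relabellings are generated by the column
transpositions together with the exchange of upper and lower entries in two columns. -/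

theorem TriAdm.swap12 {r i j k : ℕ} (h : TriAdm r i j k) : TriAdm r j i k := by
  unfold TriAdm at h ⊢; omega

theorem TriAdm.swap23 {r i j k : ℕ} (h : TriAdm r i j k) : TriAdm r i k j := by
  unfold TriAdm at h ⊢; omega

theorem TriAdm.swap13 {r i j k : ℕ} (h : TriAdm r i j k) : TriAdm r k j i :=
  h.swap12.swap23.swap12

namespace SixAdm

variable {r i j k l m n : ℕ}

theorem swap_cols12 (h : SixAdm r i j k l m n) : SixAdm r j i k m l n :=
  ⟨h.1.swap12, h.2.2.1, h.2.1, h.2.2.2.swap23⟩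

theorem swap_cols23 (h : SixAdm r i j k l m n) : SixAdm r i k j l n m :=
  ⟨h.1.swap23, h.2.2.2, h.2.2.1.swap23, h.2.1⟩

theorem swap_cols13 (h : SixAdm r i j k l m n) : SixAdm r k j i n m l :=
  h.swap_cols23.swap_cols12.swap_cols23

theorem flip_cols23 (h : SixAdm r i j k l m n) : SixAdm r i m n l j k :=
  ⟨h.2.2.1, h.2.2.2.swap13, h.1, h.2.1.swap13⟩

theorem flip_cols12 (h : SixAdm r i j k l m n) : SixAdm r l m k i j n :=
  h.swap_cols13.flip_cols23.swap_cols13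

theorem flip_cols13 (h : SixAdm r i j k l m n) : SixAdm r l j n i m k :=
  h.swap_cols12.flip_cols23.swap_cols12

end SixAdm

section Symmetries

variable (q : ℂ)

theorem triDelta_swap12 (i j k : ℕ) : triDelta q i j k = triDelta q j i k := by
  unfold triDelta
  simp only [add_comm, add_left_comm]
  ring_nf

theorem triDelta_swap23 (i j k : ℕ) : triDelta q i j k = triDelta q i k j := by
  unfold triDelta
  simp only [add_comm, add_left_comm]
  ring_nf

theorem triDelta_swap13 (i j k : ℕ) : triDelta q i j k = triDelta q k j i := by
  rw [triDelta_swap12, triDelta_swap23, triDelta_swap12]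

variable (i j k l m n : ℕ)

theorem sixj_swap_cols12 : sixj q i j k l m n = sixj q j i k m l n := by
  unfold sixj
  rw [triDelta_swap12 q j i k, triDelta_swap23 q k m l]
  simp only [add_comm, add_left_comm]
  ac_rfl

theorem sixj_swap_cols23 : sixj q i j k l m n = sixj q i k j l n m := by
  unfold sixj
  rw [triDelta_swap23 q i k j, triDelta_swap23 q i n m]
  simp only [add_comm, add_left_comm]
  ac_rfl

theorem sixj_swap_cols13 : sixj q i j k l m n = sixj q k j i n m l := by
  rw [sixj_swap_cols23, sixj_swap_cols12, sixj_swap_cols23]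

theorem sixj_flip_cols23 : sixj q i j k l m n = sixj q i m n l j k := by
  unfold sixj
  rw [triDelta_swap13 q m l k, triDelta_swap13 q n l j]
  simp only [add_comm, add_left_comm]
  ac_rfl

theorem sixj_flip_cols12 : sixj q i j k l m n = sixj q l m k i j n := by
  rw [sixj_swap_cols13, sixj_flip_cols23, sixj_swap_cols13]

theorem sixj_flip_cols13 : sixj q i j k l m n = sixj q l j n i m k := by
  rw [sixj_swap_cols12, sixj_flip_cols23, sixj_swap_cols12]

end Symmetries

theorem sixj_symmetries_general (r : ℕ) (q : ℂ)
    (i j k l m n : ℕ)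
    (hadm : SixAdm r i j k l m n) :
    (SixAdm r j i k m l n ∧ SixAdm r i k j l n m ∧ SixAdm r i m n l j k ∧
      SixAdm r l m k i j n ∧ SixAdm r l j n i m k) ∧
    (sixj q i j k l m n = sixj q j i k m l n ∧
     sixj q i j k l m n = sixj q i k j l n m ∧
     sixj q i j k l m n = sixj q i m n l j k ∧
     sixj q i j k l m n = sixj q l m k i j n ∧
     sixj q i j k l m n = sixj q l j n i m k) :=
  ⟨⟨hadm.swap_cols12, hadm.swap_cols23, hadm.flip_cols23, hadm.flip_cols12, hadm.flip_cols13⟩,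
    sixj_swap_cols12 .., sixj_swap_cols23 .., sixj_flip_cols23 .., sixj_flip_cols12 ..,
    sixj_flip_cols13 ..⟩

/-- symmetries of the quantum 6j-symbol. -/
theorem sixj_symmetries (r : ℕ) (hr : 3 ≤ r) (q : ℂ)
    (hq1 : q ^ (2 * r) = 1) (hq2 : IsPrimitiveRoot (q ^ 2) r)
    (i j k l m n : ℕ)
    (hi : i ≤ r - 2) (hj : j ≤ r - 2) (hk : k ≤ r - 2)
    (hl : l ≤ r - 2) (hm : m ≤ r - 2) (hn : n ≤ r - 2)
    (hadm : SixAdm r i j k l m n) :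
    (SixAdm r j i k m l n ∧ SixAdm r i k j l n m ∧ SixAdm r i m n l j k ∧
      SixAdm r l m k i j n ∧ SixAdm r l j n i m k) ∧
    (sixj q i j k l m n = sixj q j i k m l n ∧
     sixj q i j k l m n = sixj q i k j l n m ∧
     sixj q i j k l m n = sixj q i m n l j k ∧
     sixj q i j k l m n = sixj q l m k i j n ∧
     sixj q i j k l m n = sixj q l j n i m k) :=
  sixj_symmetries_general r q i j k l m n hadm
end

section
/- Let b, d ∈ I_r be such that the triple (b,b,d) is admissible. Then the 6-tuple (b,b,d,b,b,0) is admissible and |b b d; b b 0| = (−1)^{2b}/[2b+1]. -/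
/-! In the paper's half-integer notation, with `n = 0` the sum defining `|b b d; b b 0|` has the
single term `z = 2b + d`, namely `(−1)^{2b+d} [2b+d+1]! / ([d]!² [2b−d]!)`. It cancels against
`Δ(b,b,d)² = [2b−d]! [d]!² / [2b+d+1]!`, while `Δ(b,b,0)² = [2b]!/[2b+1]! = 1/[2b+1]` and the
prefactor is `(−1)^d`. The cancellation is legitimate because `[m] ≠ 0` for `0 < m < r`, as `q²` is
a primitive `r`-th root of unity. In the code, `b` and `2 * D` are the doubles `2b` and `d`. -/

lemma csqrt_mul_self (z : ℂ) : csqrt z * csqrt z = z := by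
  unfold csqrt
  rcases eq_or_ne z 0 with rfl | hz
  · rw [Complex.zero_cpow (by norm_num), mul_zero]
  · rw [← Complex.cpow_add _ _ hz]
    norm_num

lemma triDelta_rotate (q : ℂ) (i j k : ℕ) : triDelta q k i j = triDelta q i j k := by
  unfold triDelta
  rw [show k + i + j = i + j + k by ring]
  ring_nf

lemma qfact_succ (q : ℂ) (n : ℕ) : qfact q (n + 1) = qint q ((n : ℤ) + 1) * qfact q n := rfl

lemma zpow_sub_zpow_neg_ne_zero {q : ℂ} (hq : q ≠ 0) {m : ℕ} (h : (q ^ 2) ^ m ≠ 1) :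
    q ^ (m : ℤ) - q ^ (-(m : ℤ)) ≠ 0 := by
  rw [sub_ne_zero, zpow_neg]
  intro h'
  apply h
  rw [← pow_mul, mul_comm, pow_mul, sq, ← zpow_natCast]
  nth_rewrite 1 [h']
  exact inv_mul_cancel₀ (zpow_ne_zero _ hq)

section PrimitiveRoot

variable {q : ℂ} {r : ℕ}

lemma qint_ne_zero (hq : IsPrimitiveRoot (q ^ 2) r) {m : ℕ} (hm : 0 < m) (hmr : m < r) :
    qint q m ≠ 0 := by
  have hq0 : q ≠ 0 := fun h => hq.ne_zero (by omega) (by simp [h])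
  have hden := zpow_sub_zpow_neg_ne_zero hq0 (hq.pow_ne_one_of_pos_of_lt one_ne_zero (by omega))
  simp only [Nat.cast_one, zpow_one, zpow_neg_one] at hden
  exact div_ne_zero (zpow_sub_zpow_neg_ne_zero hq0 (hq.pow_ne_one_of_pos_of_lt hm.ne' hmr)) hden

lemma qfact_ne_zero (hq : IsPrimitiveRoot (q ^ 2) r) {n : ℕ} (hn : n < r) : qfact q n ≠ 0 := by
  induction n with
  | zero => exact one_ne_zero
  | succ k ih =>
    rw [qfact_succ]
    exact mul_ne_zero (by exact_mod_cast qint_ne_zero hq k.succ_pos hn) (ih (by omega))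

end PrimitiveRoot

lemma I_zpow_neg_two_mul (n : ℕ) : Complex.I ^ (-(2 * n : ℤ)) = (-1) ^ n := by
  rw [zpow_neg, show (2 * n : ℤ) = ((2 * n : ℕ) : ℤ) by push_cast; ring, zpow_natCast, pow_mul,
    Complex.I_sq, ← inv_pow, inv_neg_one]

lemma triDelta_bbd_mul_self (q : ℂ) {b D : ℕ} (hD : D ≤ b) :
    triDelta q b b (2 * D) * triDelta q b b (2 * D) =
      qfact q (b - D) * qfact q D * qfact q D / qfact q (b + D + 1) := by
  rw [triDelta, csqrt_mul_self, show (b + b - 2 * D) / 2 = b - D by omega,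
    show (b + 2 * D - b) / 2 = D by omega,
    show (2 * D + b - b) / 2 = D by omega, show (b + b + 2 * D) / 2 = b + D by omega]

lemma triDelta_bb0_mul_self (q : ℂ) (b : ℕ) :
    triDelta q b b 0 * triDelta q b b 0 = qfact q b / qfact q (b + 1) := by
  rw [triDelta, csqrt_mul_self]
  simp only [add_zero, Nat.sub_zero, Nat.sub_self, zero_add, Nat.zero_div, qfact, mul_one,
    show (b + b) / 2 = b by omega]

lemma sixj_bbd_bb0_eq (q : ℂ) {b D : ℕ} (hD : D ≤ b) :
    sixj q b b (2 * D) b b 0 =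
      (-1) ^ D * (triDelta q b b (2 * D) * triDelta q b b (2 * D)) *
        (triDelta q b b 0 * triDelta q b b 0) *
        ((-1) ^ (b + D) * qfact q (b + D + 1) / (qfact q D * qfact q D * qfact q (b - D))) := by
  have hprefactor : Complex.I ^ (-((b : ℤ) + b + ((2 * D : ℕ) : ℤ) + b + b + ((0 : ℕ) : ℤ))) =
      (-1) ^ D := by
    rw [show ((b : ℤ) + b + ((2 * D : ℕ) : ℤ) + b + b + ((0 : ℕ) : ℤ)) = 2 * ((2 * b + D : ℕ) : ℤ)
      by push_cast; ring, I_zpow_neg_two_mul, pow_add, pow_mul, neg_one_sq, one_pow, one_mul]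
  have hrange : Finset.Icc
      (max (max ((b + b + 2 * D) / 2) ((b + b + 0) / 2))
        (max ((b + b + 0) / 2) ((2 * D + b + b) / 2)))
      (min ((b + b + b + b) / 2) (min ((b + 2 * D + b + 0) / 2) ((b + 2 * D + b + 0) / 2)))
      = {b + D} := by
    rw [← Finset.Icc_self]
    congr 1 <;> omega
  rw [sixj, hprefactor, hrange, Finset.sum_singleton, triDelta_rotate q b b (2 * D)]
  simp only [show (b + b + 2 * D) / 2 = b + D by omega, show (b + b + 0) / 2 = b by omega,
    show (2 * D + b + b) / 2 = b + D by omega, show (b + b + b + b) / 2 = 2 * b by omega,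
    show (b + 2 * D + b + 0) / 2 = b + D by omega, Nat.sub_self, Nat.add_sub_cancel_left,
    show 2 * b - (b + D) = b - D by omega, qfact, mul_one, one_mul]
  ring

theorem sixj_with_zero'_general (r : ℕ) (hr : 3 ≤ r) (q : ℂ)
    (hq2 : IsPrimitiveRoot (q ^ 2) r)
    (b d : ℕ) (hadm : TriAdm r b b d) :
    SixAdm r b b d b b 0 ∧
    sixj q b b d b b 0 = (-1 : ℂ) ^ b / qint q ((b : ℤ) + 1) := by
  obtain ⟨D, rfl⟩ : ∃ D, d = 2 * D := ⟨d / 2, by unfold TriAdm at hadm; omega⟩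
  obtain ⟨hDb, hbDr⟩ : D ≤ b ∧ b + D + 1 < r := by unfold TriAdm at hadm; omega
  refine ⟨by unfold SixAdm TriAdm at *; omega, ?_⟩
  have hF : ∀ n ≤ b + D + 1, qfact q n ≠ 0 := fun n hn => qfact_ne_zero hq2 (by omega)
  have hQ : qint q ((b : ℤ) + 1) ≠ 0 := by exact_mod_cast qint_ne_zero hq2 b.succ_pos (by omega)
  rw [sixj_bbd_bb0_eq q hDb, triDelta_bbd_mul_self q hDb, triDelta_bb0_mul_self, qfact_succ q b]
  field_simp [hF b (by omega), hF D (by omega), hF (b - D) (by omega), hF (b + D + 1) le_rfl]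
  rw [pow_add, mul_left_comm, ← mul_pow, neg_one_mul, neg_neg, one_pow, mul_one]

/-- `|b b d; b b 0| = (−1)^{2b}/[2b+1]`. -/
theorem sixj_with_zero' (r : ℕ) (hr : 3 ≤ r) (q : ℂ)
    (hq1 : q ^ (2 * r) = 1) (hq2 : IsPrimitiveRoot (q ^ 2) r)
    (b d : ℕ) (hb : b ≤ r - 2) (hd : d ≤ r - 2) (hadm : TriAdm r b b d) :
    SixAdm r b b d b b 0 ∧
    sixj q b b d b b 0 = (-1 : ℂ) ^ b / qint q ((b : ℤ) + 1) :=
  sixj_with_zero'_general r hr q hq2 b d hadm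
end

section
/- For every integer r ≥ 3 and every root of unity q of degree 2r such that q² is a primitive root of unity of degree r, the complex number Σ_{(a,b)} w_a · w_b · |a a b; b b a|² is real, where the sum ranges over all pairs (a,b) ∈ I_r × I_r such that the 6-tuple (a,a,b,b,b,a) is admissible. (This sum is the Turaev–Viro type invariant TV_r of the figure-eight knot complement computed from its standard two-tetrahedron ideal triangulation; its reality is an instance of Theorem 3.2, which asserts that TV_r(M;q) is a real number for every compact 3-manifold M with non-empty boundary.) -/
/-!
On the unit circle `conj q = q⁻¹`, and quantum integers are invariant under `q ↦ q⁻¹`, so all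
quantum integers and factorials are real. The only non-real ingredients of a 6j-symbol are the
square roots in the `Δ`'s and the power of `i` in front, and both become real once the symbol is
squared. Hence every term of the state sum is real.
-/

open ComplexConjugate

lemma csqrt_sq (z : ℂ) : csqrt z ^ 2 = z := by
  unfold csqrt
  rcases eq_or_ne z 0 with rfl | hz
  · simp
  · rw [sq, ← Complex.cpow_add _ _ hz]
    norm_num

lemma I_zpow_sq (e : ℤ) : (Complex.I ^ e) ^ 2 = (-1) ^ e := by
  rw [← zpow_natCast, ← zpow_mul, mul_comm, zpow_mul]
  norm_num

lemma qint_inv (q : ℂ) (n : ℤ) : qint q⁻¹ n = qint q n := by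
  unfold qint
  rw [inv_inv, inv_zpow', inv_zpow', neg_neg, ← neg_div_neg_eq]
  ring_nf

lemma conj_qint (q : ℂ) (n : ℤ) : conj (qint q n) = qint (conj q) n := by
  simp [qint, map_zpow₀]

lemma conj_qint_of_norm_eq_one {q : ℂ} (hq : ‖q‖ = 1) (n : ℤ) :
    conj (qint q n) = qint q n := by
  rw [conj_qint, ← Complex.inv_eq_conj hq, qint_inv]

lemma conj_qfact_of_norm_eq_one {q : ℂ} (hq : ‖q‖ = 1) (n : ℕ) :
    conj (qfact q n) = qfact q n := by
  induction n with
  | zero => simp [qfact]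
  | succ n ih => rw [qfact, map_mul, ih, conj_qint_of_norm_eq_one hq]

lemma conj_wgt_of_norm_eq_one {q : ℂ} (hq : ‖q‖ = 1) (i : ℕ) : conj (wgt q i) = wgt q i := by
  simp [wgt, conj_qint_of_norm_eq_one hq]

lemma conj_triDelta_sq_of_norm_eq_one {q : ℂ} (hq : ‖q‖ = 1) (i j k : ℕ) :
    conj (triDelta q i j k ^ 2) = triDelta q i j k ^ 2 := by
  simp only [triDelta, csqrt_sq, map_div₀, map_mul, conj_qfact_of_norm_eq_one hq]

lemma conj_sixj_sq_of_norm_eq_one {q : ℂ} (hq : ‖q‖ = 1) (i j k l m n : ℕ) :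
    conj (sixj q i j k l m n ^ 2) = sixj q i j k l m n ^ 2 := by
  simp only [sixj, mul_pow, map_mul, I_zpow_sq, map_zpow₀, map_neg, map_one,
    conj_triDelta_sq_of_norm_eq_one hq, map_pow, map_sum, map_div₀,
    conj_qfact_of_norm_eq_one hq]

theorem tv_figure_eight_real_general (r : ℕ) (hr : 3 ≤ r) (q : ℂ)
    (hq1 : q ^ (2 * r) = 1) :
    (∑ p ∈ ((Finset.range (r - 1)) ×ˢ (Finset.range (r - 1))).filter
        (fun p => SixAdm r p.1 p.1 p.2 p.2 p.2 p.1),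
      wgt q p.1 * wgt q p.2 * (sixj q p.1 p.1 p.2 p.2 p.2 p.1) ^ 2).im = 0 := by
  have hq : ‖q‖ = 1 := Complex.norm_eq_one_of_pow_eq_one hq1 (by omega)
  rw [← Complex.conj_eq_iff_im, map_sum]
  refine Finset.sum_congr rfl fun p _ => ?_
  simp only [map_mul, conj_wgt_of_norm_eq_one hq, conj_sixj_sq_of_norm_eq_one hq]

/-- the Turaev–Viro type state sum of the figure-eight knot complement
is a real number. -/
theorem tv_figure_eight_real (r : ℕ) (hr : 3 ≤ r) (q : ℂ)
    (hq1 : q ^ (2 * r) = 1) (hq2 : IsPrimitiveRoot (q ^ 2) r) :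
    (∑ p ∈ ((Finset.range (r - 1)) ×ˢ (Finset.range (r - 1))).filter
        (fun p => SixAdm r p.1 p.1 p.2 p.2 p.2 p.1),
      wgt q p.1 * wgt q p.2 * (sixj q p.1 p.1 p.2 p.2 p.2 p.1) ^ 2).im = 0 :=
  tv_figure_eight_real_general r hr q hq1
end
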